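/- arXiv:1807.03714 — 5 statements merged into one kernel-verified Lean document; each statement's English description precedes it below -/
import Mathlib

section
/- For every natural number n ≥ 2, the sum of the triple products C_i · C_j · C_k over all triples (i, j, k) of natural numbers with i + j + k = n - 1 equals C_{n+1} - C_n; that is, ∑_{i+j+k=n-1} C_i C_j C_k = C_{n+1} - C_n. -/
/-!
Splitting off the first index, the triple sum is `∑_{i+l=n-1} C_i ∑_{j+k=l} C_j C_k
= ∑_{i+l=n-1} C_i C_{l+1}`. This is Segner's recurrence for `C_{n+1}` with its single
`l + 1 = 0` term `C_n C_0 = C_n` removed.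
-/

open Finset

theorem Finset.Nat.sum_antidiagonalTuple_succ {M : Type*} [AddCommMonoid M] (k n : ℕ)
    (f : (Fin (k + 1) → ℕ) → M) :
    ∑ p ∈ Nat.antidiagonalTuple (k + 1) n, f p =
      ∑ ij ∈ antidiagonal n, ∑ q ∈ Nat.antidiagonalTuple k ij.2, f (Fin.cons ij.1 q) := by
  rw [sum_sigma']
  refine sum_nbij' (fun p => ⟨(p 0, ∑ i, Fin.tail p i), Fin.tail p⟩)
    (fun q => Fin.cons q.1.1 q.2)
    ?_ ?_ (fun p _ => Fin.cons_self_tail p) ?_ (fun p _ => by simp)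
  · intro p hp
    simp_all [Nat.mem_antidiagonalTuple, Fin.sum_univ_succ, Fin.tail]
  · rintro ⟨⟨i, j⟩, q⟩ hq
    simp_all [Nat.mem_antidiagonalTuple, Fin.sum_univ_succ]
  · rintro ⟨⟨i, j⟩, q⟩ hq
    simp_all [Nat.mem_antidiagonalTuple]

theorem Finset.Nat.sum_antidiagonalTuple_three {M : Type*} [AddCommMonoid M] (n : ℕ)
    (f : ℕ → ℕ → ℕ → M) :
    ∑ p ∈ Nat.antidiagonalTuple 3 n, f (p 0) (p 1) (p 2) =
      ∑ ij ∈ antidiagonal n, ∑ kl ∈ antidiagonal ij.2, f ij.1 kl.1 kl.2 := by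
  rw [Nat.sum_antidiagonalTuple_succ 2]
  simp_rw [Nat.antidiagonalTuple_two, sum_map]
  rfl

theorem catalan_add_two (m : ℕ) :
    catalan (m + 2) =
      catalan (m + 1) + ∑ ij ∈ antidiagonal m, catalan ij.1 * catalan (ij.2 + 1) := by
  rw [catalan_succ', Nat.antidiagonal_succ', sum_cons, sum_map]
  simp [catalan_zero]

/-- For every `n ≥ 2`, the sum of triple products of Catalan numbers
`C_i * C_j * C_k` over all triples `(i, j, k)` with `i + j + k = n - 1`
equals `C_{n+1} - C_n`. -/
theorem catalan_triple_sum (n : ℕ) (hn : 2 ≤ n) :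
    ∑ p ∈ Finset.Nat.antidiagonalTuple 3 (n - 1),
      catalan (p 0) * catalan (p 1) * catalan (p 2) =
    catalan (n + 1) - catalan n := by
  obtain ⟨m, rfl⟩ : ∃ m, n = m + 1 := ⟨n - 1, by omega⟩
  rw [Nat.add_sub_cancel,
    Nat.sum_antidiagonalTuple_three (f := fun i j k => catalan i * catalan j * catalan k)]
  simp_rw [mul_assoc, ← mul_sum, ← catalan_succ']
  rw [catalan_add_two]
  omega
end

section
/- For every natural number k ≥ 2, the following identity holds: 3^{k-1}·C_{k-1} + ∑_{(i,j,l)} (3^{i-1}·C_{i-1})·(3^{j-1}·C_{j-1})·(3^{l-1}·C_{l-1}) = 3^{k-2}·(C_k + 2·C_{k-1}), where the sum runs over all triples (i, j, l) of natural numbers with i, j, l ≥ 1 and i + j + l = k + 1. -/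
/-!
Shifting every index of the triple sum down by one and pulling out the common weight
`3^(a+b+c) = 3^(k-2)` leaves `3^(k-2) ∑_{a+b+c = k-2} C_a C_b C_c`. Two applications of the
Catalan recurrence show that this triple convolution is `C_k - C_(k-1)`, so the left-hand side is
`3^(k-1) C_(k-1) + 3^(k-2) (C_k - C_(k-1)) = 3^(k-2) (C_k + 2 C_(k-1))`.
-/

open Finset

namespace Finset.Nat

variable {M : Type*} [AddCommMonoid M]

theorem sum_antidiagonalTuple_three_s2 (f : ℕ → ℕ → ℕ → M) (n : ℕ) :
    ∑ p ∈ antidiagonalTuple 3 n, f (p 0) (p 1) (p 2) =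
      ∑ ab ∈ antidiagonal n, ∑ cd ∈ antidiagonal ab.2, f ab.1 cd.1 cd.2 := by
  rw [sum_sigma']
  refine sum_nbij' (fun p => ⟨(p 0, p 1 + p 2), (p 1, p 2)⟩)
    (fun x => ![x.1.1, x.2.1, x.2.2]) ?_ ?_ ?_ ?_ fun _ _ => rfl
  · intro p hp
    rw [mem_antidiagonalTuple, Fin.sum_univ_three] at hp
    simp [← hp, add_assoc]
  · rintro ⟨⟨a, b⟩, ⟨c, d⟩⟩ hx
    simp only [mem_sigma, HasAntidiagonal.mem_antidiagonal] at hx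
    simp [mem_antidiagonalTuple, Fin.sum_univ_three, ← hx.1, ← hx.2, add_assoc]
  · intro p _
    funext i
    fin_cases i <;> rfl
  · rintro ⟨⟨a, b⟩, ⟨c, d⟩⟩ hx
    simp only [mem_sigma, HasAntidiagonal.mem_antidiagonal] at hx
    simp [← hx.2]

theorem sum_antidiagonalTuple_three_filter_pos (f : ℕ → ℕ → ℕ → M) (n : ℕ) :
    ∑ p ∈ (antidiagonalTuple 3 (n + 3)).filter (fun p => 1 ≤ p 0 ∧ 1 ≤ p 1 ∧ 1 ≤ p 2),
        f (p 0) (p 1) (p 2) =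
      ∑ p ∈ antidiagonalTuple 3 n, f (p 0 + 1) (p 1 + 1) (p 2 + 1) := by
  refine (sum_nbij' (fun p : Fin 3 → ℕ => p + 1) (fun p => p - 1) ?_ ?_ ?_ ?_ fun _ _ => rfl).symm
  · intro p hp
    simp only [mem_antidiagonalTuple, Fin.sum_univ_three] at hp
    simp only [mem_filter, mem_antidiagonalTuple, Fin.sum_univ_three, Pi.add_apply, Pi.one_apply]
    omega
  · intro p hp
    simp only [mem_filter, mem_antidiagonalTuple, Fin.sum_univ_three] at hp
    simp only [mem_antidiagonalTuple, Fin.sum_univ_three, Pi.sub_apply, Pi.one_apply]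
    omega
  · intro p _
    simp
  · intro p hp
    simp only [mem_filter] at hp
    funext i
    fin_cases i <;> simp <;> omega

end Finset.Nat

theorem catalan_triple_convolution (n : ℕ) :
    ∑ p ∈ Finset.Nat.antidiagonalTuple 3 n, catalan (p 0) * catalan (p 1) * catalan (p 2) +
      catalan (n + 1) = catalan (n + 2) := by
  rw [Finset.Nat.sum_antidiagonalTuple_three_s2 (fun a b c => catalan a * catalan b * catalan c),
    catalan_succ' (n + 1), Nat.sum_antidiagonal_succ', catalan_zero, mul_one, add_comm]
  refine congrArg _ (sum_congr rfl fun ab _ => ?_)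
  simp only [catalan_succ' ab.2, mul_sum, mul_assoc]

/-- For every `k ≥ 2`,
`3^(k-1) C_(k-1) + ∑_{i+j+l = k+1, i,j,l ≥ 1} 3^(i-1) C_(i-1) · 3^(j-1) C_(j-1) · 3^(l-1) C_(l-1)
  = 3^(k-2) (C_k + 2 C_(k-1))`. -/
theorem main_count_identity (k : ℕ) (hk : 2 ≤ k) :
    3 ^ (k - 1) * catalan (k - 1) +
      ∑ p ∈ (Finset.Nat.antidiagonalTuple 3 (k + 1)).filter
          (fun p => 1 ≤ p 0 ∧ 1 ≤ p 1 ∧ 1 ≤ p 2),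
        (3 ^ (p 0 - 1) * catalan (p 0 - 1)) * (3 ^ (p 1 - 1) * catalan (p 1 - 1)) *
          (3 ^ (p 2 - 1) * catalan (p 2 - 1)) =
    3 ^ (k - 2) * (catalan k + 2 * catalan (k - 1)) := by
  obtain ⟨n, rfl⟩ : ∃ n, k = n + 2 := ⟨k - 2, by omega⟩
  have weighted : ∀ p ∈ Finset.Nat.antidiagonalTuple 3 n,
      (3 ^ p 0 * catalan (p 0)) * (3 ^ p 1 * catalan (p 1)) * (3 ^ p 2 * catalan (p 2)) =
        3 ^ n * (catalan (p 0) * catalan (p 1) * catalan (p 2)) := by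
    intro p hp
    rw [Finset.Nat.mem_antidiagonalTuple, Fin.sum_univ_three] at hp
    rw [← hp, pow_add, pow_add]
    ring
  rw [show n + 2 - 1 = n + 1 from rfl, show n + 2 - 2 = n from rfl,
    show n + 2 + 1 = n + 3 from rfl, Finset.Nat.sum_antidiagonalTuple_three_filter_pos
    (fun a b c => (3 ^ (a - 1) * catalan (a - 1)) * (3 ^ (b - 1) * catalan (b - 1)) *
      (3 ^ (c - 1) * catalan (c - 1)))]
  simp only [Nat.add_sub_cancel]
  rw [sum_congr rfl weighted, ← mul_sum, ← catalan_triple_convolution n]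
  ring
end

section
/- For every natural number n ≥ 1, the following identity of real numbers holds: 3^{n-1} · (C_{n+1} + 2·C_n) = 2 · 12^n · (n+1) · Γ(n + 1/2) / (√π · Γ(n + 3)), where Γ is the real Gamma function. (For example, for n = 1 both sides equal 4, for n = 2 both equal 27, and for n = 3 both equal 216.) -/
open Real

lemma gamma_nat_add_half (m : ℕ) :
    Real.Gamma ((m : ℝ) + 1 / 2) =
      ((2 * m).factorial : ℝ) * Real.sqrt π / (4 ^ m * (m.factorial : ℝ)) := by
  induction m with
  | zero =>
      rw [show ((0:ℕ):ℝ) + 1 / 2 = 1 / 2 by norm_num, Real.Gamma_one_half_eq]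
      simp
  | succ k ih =>
      have hne : ((k : ℝ) + 1 / 2) ≠ 0 := by positivity
      have h1 : ((k : ℝ) + 1) + 1 / 2 = ((k : ℝ) + 1 / 2) + 1 := by ring
      have h2 : (2 * (k + 1)).factorial =
          (2 * k + 2) * ((2 * k + 1) * (2 * k).factorial) := by
        have : 2 * (k + 1) = (2 * k + 1) + 1 := by ring
        rw [this, Nat.factorial_succ, Nat.factorial_succ]
      push_cast [h1, Real.Gamma_add_one hne, ih, h2, Nat.factorial_succ]
      have h4 : (4 : ℝ) ^ k ≠ 0 := by positivity
      have hf : ((k.factorial : ℝ)) ≠ 0 := by positivity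
      field_simp
      ring

lemma catalan_real (m : ℕ) :
    (catalan m : ℝ) = ((2 * m).factorial : ℝ) / (m.factorial * (m + 1).factorial) := by
  have h1 : (m + 1) * catalan m * (m.factorial * m.factorial) = (2 * m).factorial := by
    rw [succ_mul_catalan_eq_centralBinom, Nat.centralBinom]
    have := Nat.choose_mul_factorial_mul_factorial (show m ≤ 2 * m by omega)
    simpa [two_mul, Nat.add_sub_cancel, mul_assoc] using this
  have h2 := congrArg (Nat.cast : ℕ → ℝ) h1
  push_cast at h2
  have hf : ((m.factorial : ℝ)) ≠ 0 := by positivity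
  have hm : ((m : ℝ) + 1) ≠ 0 := by positivity
  rw [Nat.factorial_succ]
  push_cast
  field_simp
  nlinarith [h2]

/-- For every `n ≥ 1`, as real numbers,
`3^(n-1) (C_(n+1) + 2 C_n) = 2 · 12^n · (n+1) · Γ(n + 1/2) / (√π · Γ(n + 3))`. -/
theorem T_eq_A275607_gamma (n : ℕ) (hn : 1 ≤ n) :
    (3 : ℝ) ^ (n - 1) * ((catalan (n + 1) : ℝ) + 2 * (catalan n : ℝ)) =
      2 * 12 ^ n * (n + 1) * Real.Gamma ((n : ℝ) + 1 / 2) /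
        (Real.sqrt π * Real.Gamma ((n : ℝ) + 3)) := by
  obtain ⟨m, rfl⟩ : ∃ m, n = m + 1 := ⟨n - 1, by omega⟩
  have hG3 : Real.Gamma (((m + 1 : ℕ) : ℝ) + 3) = ((m + 3).factorial : ℝ) := by
    have : (((m + 1 : ℕ) : ℝ) + 3) = ((m + 3 : ℕ) : ℝ) + 1 := by push_cast; ring
    rw [this, Real.Gamma_nat_eq_factorial]
  have hGh := gamma_nat_add_half (m + 1)
  rw [show (((m + 1 : ℕ) : ℝ) + 1 / 2) = (((m + 1 : ℕ) : ℝ) + 1 / 2) from rfl] at hGh ⊢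
  rw [hG3]
  rw [show (((m + 1 : ℕ) : ℝ) + 1 / 2) = ((m + 1 : ℕ) : ℝ) + 1 / 2 from rfl, hGh]
  rw [catalan_real (m + 1 + 1), catalan_real (m + 1)]
  have e1 : (2 * (m + 1 + 1)).factorial =
      (2 * m + 4) * ((2 * m + 3) * (2 * (m + 1)).factorial) := by
    rw [show 2 * (m + 1 + 1) = (2 * m + 2) + 1 + 1 by ring, Nat.factorial_succ,
      Nat.factorial_succ, show 2 * (m + 1) = 2 * m + 2 by ring]
  have e2 : (m + 1 + 1).factorial = (m + 2) * (m + 1).factorial := by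
    rw [Nat.factorial_succ]
  have e3 : (m + 1 + 1 + 1).factorial = (m + 3) * ((m + 2) * (m + 1).factorial) := by
    rw [Nat.factorial_succ, e2]
  rw [e1, e3, e2]
  have hsqrt : Real.sqrt π ≠ 0 := by
    positivity
  have hf1 : ((m + 1).factorial : ℝ) ≠ 0 := by positivity
  have hf2 : (((2 * (m + 1)).factorial : ℕ) : ℝ) ≠ 0 := by positivity
  have h4 : (4 : ℝ) ^ (m + 1) ≠ 0 := by positivity
  have h12 : (12 : ℝ) ^ (m + 1) = 3 ^ (m + 1) * 4 ^ (m + 1) := by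
    rw [← mul_pow]; norm_num
  rw [h12]
  push_cast
  field_simp
  ring
end

section
/- For every real number x with 0 < |x| < 1/12, the series 1/9 + ∑_{k=1}^{∞} (3^k/9)·(C_k + 2·C_{k-1})·x^k converges and its sum equals (1 + 6x)·(1 − √(1 − 12x)) / (54x). In other words, the function T(x) = (1+6x)(1−√(1−12x))/(54x) is a generating function whose coefficient of x^k for k ≥ 1 is T_{2k} = 3^{k-2}·(C_k + 2·C_{k-1}), and whose constant term is 1/9. -/
open Finset

private lemma catalan_le_four_pow (n : ℕ) : catalan n ≤ 4 ^ n := by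
  calc catalan n ≤ n.centralBinom := by
        rw [catalan_eq_centralBinom_div]; exact Nat.div_le_self _ _
    _ ≤ 4 ^ n := by
        have h : (2 * n).choose n ≤ ∑ m ∈ range (2 * n + 1), (2 * n).choose m :=
          Finset.single_le_sum (fun i _ => Nat.zero_le _) (by simp; omega)
        rw [Nat.sum_range_choose] at h
        calc n.centralBinom = (2 * n).choose n := rfl
          _ ≤ 2 ^ (2 * n) := h
          _ = 4 ^ n := by rw [pow_mul]; norm_num

private lemma cat_summable {y : ℝ} (hy : |y| < 1 / 4) :
    Summable (fun k : ℕ => ‖(catalan k : ℝ) * y ^ (k + 1)‖) := by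
  have h4 : |4 * y| < 1 := by rw [abs_mul]; simp only [abs_of_nonneg (by norm_num : (0:ℝ) ≤ 4)]; linarith
  have hgeo : Summable (fun k : ℕ => |y| * |4 * y| ^ k) :=
    (summable_geometric_of_lt_one (abs_nonneg _) h4).mul_left _
  refine hgeo.of_nonneg_of_le (fun k => norm_nonneg _) (fun k => ?_)
  have hcat : (catalan k : ℝ) ≤ 4 ^ k := by
    exact_mod_cast (Nat.cast_le (α := ℝ)).2 (catalan_le_four_pow k)
  calc ‖(catalan k : ℝ) * y ^ (k + 1)‖ = (catalan k : ℝ) * |y| ^ (k + 1) := by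
        rw [norm_mul, norm_pow]
        simp [Real.norm_eq_abs, abs_of_nonneg (by positivity : (0:ℝ) ≤ (catalan k : ℝ))]
    _ ≤ (4 : ℝ) ^ k * |y| ^ (k + 1) := by
        apply mul_le_mul_of_nonneg_right hcat (by positivity)
    _ = |y| * |4 * y| ^ k := by
        rw [abs_mul, abs_of_nonneg (by norm_num : (0:ℝ) ≤ 4), mul_pow, pow_succ]
        ring

/-- Partial sums of the Catalan series at nonneg `t ≤ 1/4` are at most the small root. -/
private lemma cat_partial_le {t : ℝ} (ht0 : 0 ≤ t) (ht : t ≤ 1 / 4) (N : ℕ) :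
    ∑ k ∈ range N, (catalan k : ℝ) * t ^ (k + 1) ≤ (1 - Real.sqrt (1 - 4 * t)) / 2 := by
  set s := Real.sqrt (1 - 4 * t) with hs
  have hs0 : 0 ≤ s := Real.sqrt_nonneg _
  have hs1 : s ≤ 1 := Real.sqrt_le_one.mpr (by linarith)
  have hssq : s ^ 2 = 1 - 4 * t := Real.sq_sqrt (by linarith)
  set ρ : ℝ := (1 - s) / 2 with hρ
  have hρ0 : 0 ≤ ρ := by rw [hρ]; linarith
  have hρsq : ρ ^ 2 = ρ - t := by
    rw [hρ]; field_simp; nlinarith [hssq]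
  induction N with
  | zero => simpa using hρ0
  | succ N ih =>
    have hsum0 : (0:ℝ) ≤ ∑ k ∈ range N, (catalan k : ℝ) * t ^ (k + 1) :=
      Finset.sum_nonneg fun k _ => by positivity
    rw [Finset.sum_range_succ' (fun k => (catalan k : ℝ) * t ^ (k + 1)) N]
    have hstep : ∑ k ∈ range N, (catalan (k + 1) : ℝ) * t ^ (k + 1 + 1)
        ≤ (∑ k ∈ range N, (catalan k : ℝ) * t ^ (k + 1)) ^ 2 := by
      have hrw : ∀ k ∈ range N, (catalan (k + 1) : ℝ) * t ^ (k + 1 + 1)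
          = ∑ p ∈ antidiagonal k,
              ((catalan p.1 : ℝ) * t ^ (p.1 + 1)) * ((catalan p.2 : ℝ) * t ^ (p.2 + 1)) := by
        intro k _
        rw [catalan_succ']
        push_cast
        rw [Finset.sum_mul]
        refine Finset.sum_congr rfl fun p hp => ?_
        have hpk : p.1 + p.2 = k := Finset.HasAntidiagonal.mem_antidiagonal.mp hp
        rw [← hpk]; ring
      rw [Finset.sum_congr rfl hrw]
      have hdisj : (↑(range N) : Set ℕ).PairwiseDisjoint
          (fun k => (antidiagonal k : Finset (ℕ × ℕ))) := by
        intro a _ b _ hab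
        simp only [Finset.disjoint_left]
        intro p hpa hpb
        exact hab ((Finset.HasAntidiagonal.mem_antidiagonal.mp hpa).symm.trans (Finset.HasAntidiagonal.mem_antidiagonal.mp hpb))
      rw [← Finset.sum_biUnion hdisj]
      have hsub : (range N).biUnion (fun k => antidiagonal k) ⊆ range N ×ˢ range N := by
        intro p hp
        rcases Finset.mem_biUnion.mp hp with ⟨k, hk, hpk⟩
        have hk' : k < N := Finset.mem_range.mp hk
        have h1 : p.1 + p.2 = k := Finset.HasAntidiagonal.mem_antidiagonal.mp hpk
        rw [Finset.mem_product, Finset.mem_range, Finset.mem_range]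
        omega
      refine (Finset.sum_le_sum_of_subset_of_nonneg hsub fun p _ _ => by positivity).trans_eq ?_
      rw [sq, Finset.sum_mul_sum]
      rw [Finset.sum_product]
    calc (∑ k ∈ range N, (catalan (k + 1) : ℝ) * t ^ (k + 1 + 1))
          + (catalan 0 : ℝ) * t ^ (0 + 1)
        ≤ (∑ k ∈ range N, (catalan k : ℝ) * t ^ (k + 1)) ^ 2 + t := by
          simp only [catalan_zero, Nat.cast_one, one_mul, zero_add, pow_one]
          linarith [hstep]
      _ ≤ ρ ^ 2 + t := by
          have := sq_le_sq' (by linarith : -ρ ≤ ∑ k ∈ range N, (catalan k : ℝ) * t ^ (k + 1))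
            (ih)
          linarith [this]
      _ = ρ := by rw [hρsq]; ring

/-- Catalan generating function. -/
private lemma catalan_hasSum {y : ℝ} (hy0 : y ≠ 0) (hy : |y| < 1 / 4) :
    HasSum (fun k : ℕ => (catalan k : ℝ) * y ^ (k + 1))
      ((1 - Real.sqrt (1 - 4 * y)) / 2) := by
  set f : ℕ → ℝ := fun k => (catalan k : ℝ) * y ^ (k + 1) with hf
  have hnorm : Summable fun k => ‖f k‖ := cat_summable hy
  have hsum : Summable f := hnorm.of_norm
  set S : ℝ := ∑' k, f k with hS
  -- Cauchy product gives S^2 = S - y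
  have hcauchy : S * S = ∑' n, ∑ p ∈ antidiagonal n, f p.1 * f p.2 :=
    tsum_mul_tsum_eq_tsum_sum_antidiagonal_of_summable_norm hnorm hnorm
  have hterm : ∀ n : ℕ, (∑ p ∈ antidiagonal n, f p.1 * f p.2) = f (n + 1) := by
    intro n
    have : ∀ p ∈ antidiagonal n, f p.1 * f p.2
        = ((catalan p.1 : ℝ) * (catalan p.2 : ℝ)) * y ^ (n + 2) := by
      intro p hp
      have hpk : p.1 + p.2 = n := Finset.HasAntidiagonal.mem_antidiagonal.mp hp
      simp only [hf]
      rw [← hpk]; ring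
    rw [Finset.sum_congr rfl this, ← Finset.sum_mul]
    simp only [hf, catalan_succ']
    push_cast
    ring
  have hshift : S = f 0 + ∑' n, f (n + 1) := Summable.tsum_eq_zero_add hsum
  have hf0 : f 0 = y := by simp [hf]
  have hquad : S * S = S - y := by
    rw [hcauchy, tsum_congr hterm]
    rw [hshift, hf0]; ring
  -- Bound: S ≤ 1/2
  have habs : |S| ≤ 1 / 2 := by
    have h1 : |S| ≤ ∑' k, ‖f k‖ := norm_tsum_le_tsum_norm hnorm
    have h2 : (∑' k, ‖f k‖) ≤ 1 / 2 := by
      apply Real.tsum_le_of_sum_range_le (fun n => norm_nonneg _)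
      intro n
      have hrw : ∀ k, ‖f k‖ = (catalan k : ℝ) * |y| ^ (k + 1) := by
        intro k
        simp only [hf, norm_mul, norm_pow, Real.norm_eq_abs, Nat.abs_cast]
      calc ∑ k ∈ range n, ‖f k‖ = ∑ k ∈ range n, (catalan k : ℝ) * |y| ^ (k + 1) :=
            Finset.sum_congr rfl fun k _ => hrw k
        _ ≤ (1 - Real.sqrt (1 - 4 * |y|)) / 2 :=
            cat_partial_le (abs_nonneg y) (le_of_lt hy) n
        _ ≤ 1 / 2 := by linarith [Real.sqrt_nonneg (1 - 4 * |y|)]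
    linarith
  -- Solve the quadratic
  have ha : (2 * S - 1) ^ 2 = 1 - 4 * y := by nlinarith [hquad]
  have ha0 : 2 * S - 1 ≤ 0 := by
    have := abs_le.mp habs
    linarith [this.2]
  have hsqrt : Real.sqrt (1 - 4 * y) = -(2 * S - 1) := by
    rw [← ha, Real.sqrt_sq_eq_abs, abs_of_nonpos ha0]
  have hSval : S = (1 - Real.sqrt (1 - 4 * y)) / 2 := by
    rw [hsqrt]; ring
  rw [← hSval]
  exact hsum.hasSum

/-- For `0 < |x| < 1/12`, the series `1/9 + ∑_{k≥1} (3^k/9)(C_k + 2 C_(k-1)) x^k`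
converges with sum `(1 + 6x)(1 − √(1 − 12x))/(54x)`. -/
theorem generating_function_T (x : ℝ) (hx0 : 0 < |x|) (hx : |x| < 1 / 12) :
    HasSum
      (fun k : ℕ =>
        if k = 0 then (1 / 9 : ℝ)
        else (3 ^ k / 9) * ((catalan k : ℝ) + 2 * (catalan (k - 1) : ℝ)) * x ^ k)
      ((1 + 6 * x) * (1 - Real.sqrt (1 - 12 * x)) / (54 * x)) := by
  have hxne : x ≠ 0 := by intro h; rw [h] at hx0; simp at hx0
  set y : ℝ := 3 * x with hy
  have hyne : y ≠ 0 := by simp [hy, hxne]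
  have hyabs : |y| < 1 / 4 := by
    rw [hy, abs_mul, abs_of_nonneg (by norm_num : (0:ℝ) ≤ 3)]
    linarith
  have hS := catalan_hasSum hyne hyabs
  set S : ℝ := (1 - Real.sqrt (1 - 4 * y)) / 2 with hSdef
  -- Series A:  (1/9) * catalan k * y^k  sums to S/(9y)
  have hA : HasSum (fun k : ℕ => (1 / 9 : ℝ) * ((catalan k : ℝ) * y ^ k)) (1 / 9 * (S / y)) := by
    have := (hS.div_const y).mul_left (1 / 9 : ℝ)
    refine this.congr_fun fun k => ?_
    field_simp
    ring
  -- Series B:  b 0 = 0, b (k+1) = (2/9) * catalan k * y^(k+1), sums to (2/9) * S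
  set b : ℕ → ℝ := fun k => if k = 0 then 0 else (2 / 9 : ℝ) * ((catalan (k - 1) : ℝ) * y ^ k)
    with hb
  have hB : HasSum b ((2 / 9 : ℝ) * S) := by
    have h1 : HasSum (fun k : ℕ => b (k + 1)) ((2 / 9 : ℝ) * S) := by
      refine (hS.mul_left (2 / 9 : ℝ)).congr_fun fun k => ?_
      simp [hb]
    have := (hasSum_nat_add_iff (f := b) 1).mp h1
    simpa [hb] using this
  have hAB := hA.add hB
  have hfun : (fun k : ℕ =>
      if k = 0 then (1 / 9 : ℝ)
      else (3 ^ k / 9) * ((catalan k : ℝ) + 2 * (catalan (k - 1) : ℝ)) * x ^ k)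
      = fun k : ℕ => (1 / 9 : ℝ) * ((catalan k : ℝ) * y ^ k) + b k := by
    funext k
    rcases Nat.eq_zero_or_pos k with hk | hk
    · subst hk; simp [hb]
    · have hkne : k ≠ 0 := Nat.pos_iff_ne_zero.mp hk
      simp only [hb, if_neg hkne]
      have hyx : y ^ k = 3 ^ k * x ^ k := by rw [hy, mul_pow]
      rw [hyx]; ring
  have hval : (1 : ℝ) / 9 * (S / y) + 2 / 9 * S
      = (1 + 6 * x) * (1 - Real.sqrt (1 - 12 * x)) / (54 * x) := by
    have h12 : 1 - 4 * y = 1 - 12 * x := by rw [hy]; ring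
    rw [hSdef, h12, hy]
    field_simp
    ring
  rw [hfun]
  rw [← hval]
  exact hAB
end

section
/- Let n be an even natural number with n ≥ 2. Consider the finite set of pairs (a, s), where a ∈ ZMod n and s is an unordered pair (possibly with repeated entry, i.e. an element of Sym2 (ZMod n)) such that every element p of s satisfies p ≠ a and p has the same parity as a (i.e. the representatives of p and a in {0, 1, …, n−1} are congruent modulo 2). Then the cardinality of this set equals n²(n−2)/8. -/
open Finset in
private lemma parity_count (m r : ℕ) (hr : r < 2) :
    #((Finset.range (2 * m)).filter (fun k => k % 2 = r)) = m := by
  induction m with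
  | zero => simp
  | succ m ih =>
    rw [show 2 * (m + 1) = (2 * m + 1) + 1 from by ring, Finset.range_add_one,
      Finset.range_add_one, Finset.filter_insert, Finset.filter_insert]
    interval_cases r
    · rw [if_neg (by omega), if_pos (by omega),
        Finset.card_insert_of_notMem (by simp), ih]
    · rw [if_pos (by omega), if_neg (by omega),
        Finset.card_insert_of_notMem (by simp), ih]

private lemma card_even_subtype (n : ℕ) (hn : 2 ≤ n) (heven : Even n) (a : ZMod n) :
    Nat.card {p : ZMod n // p ≠ a ∧ p.val % 2 = a.val % 2} = n / 2 - 1 := by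
  classical
  haveI : NeZero n := ⟨by omega⟩
  rw [Nat.card_eq_fintype_card, Fintype.card_subtype]
  have hbij : (Finset.univ.filter (fun p : ZMod n => p ≠ a ∧ p.val % 2 = a.val % 2)).card =
      ((Finset.range n).filter (fun k => k ≠ a.val ∧ k % 2 = a.val % 2)).card := by
    apply Finset.card_bij' (fun p _ => ZMod.val p) (fun k _ => (k : ZMod n))
    · intro p hp
      simp only [Finset.mem_filter, Finset.mem_univ, true_and] at hp
      simp only [Finset.mem_filter, Finset.mem_range]
      refine ⟨ZMod.val_lt p, fun h => hp.1 ?_, hp.2⟩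
      have := congrArg (fun k : ℕ => (k : ZMod n)) h
      simpa [ZMod.natCast_val, ZMod.cast_id] using this
    · intro k hk
      simp only [Finset.mem_filter, Finset.mem_range] at hk
      simp only [Finset.mem_filter, Finset.mem_univ, true_and]
      rw [ZMod.val_cast_of_lt hk.1]
      refine ⟨fun h => hk.2.1 ?_, hk.2.2⟩
      rw [← ZMod.val_cast_of_lt hk.1, h]
    · intro p _
      simp [ZMod.natCast_val, ZMod.cast_id]
    · intro k hk
      simp only [Finset.mem_filter, Finset.mem_range] at hk
      exact ZMod.val_cast_of_lt hk.1
  rw [hbij]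
  have herase : (Finset.range n).filter (fun k => k ≠ a.val ∧ k % 2 = a.val % 2) =
      ((Finset.range n).filter (fun k => k % 2 = a.val % 2)).erase a.val := by
    ext k
    simp only [Finset.mem_filter, Finset.mem_erase, Finset.mem_range]
    tauto
  rw [herase, Finset.card_erase_of_mem (by
    simp [Finset.mem_filter, Finset.mem_range, ZMod.val_lt a])]
  obtain ⟨m, rfl⟩ := heven
  have hp := parity_count m (a.val % 2) (Nat.mod_lt _ (by norm_num))
  rw [show 2 * m = m + m from by ring] at hp
  rw [hp]
  omega

/-- `Sym2` of a subtype is equivalent to the subtype of `Sym2` where all members satisfy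
the predicate. -/
private def sym2SubtypeEquiv {α : Type*} (Q : α → Prop) :
    {s : Sym2 α // ∀ p ∈ s, Q p} ≃ Sym2 {p // Q p} where
  toFun s := s.1.attachWith s.2
  invFun t := ⟨t.map Subtype.val, fun p hp => by
    obtain ⟨q, _, rfl⟩ := Sym2.mem_map.mp hp
    exact q.2⟩
  left_inv s := Subtype.ext (Sym2.attachWith_map_subtypeVal s.2)
  right_inv t := by
    induction t using Sym2.ind with
    | _ x y => rfl

/-- For even `n ≥ 2`, the number of pairs `(a, s)` with `a : ZMod n` and
`s : Sym2 (ZMod n)` such that every element `p` of `s` satisfies `p ≠ a` and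
has the same parity as `a`, equals `n²(n−2)/8`. -/
theorem card_gamma_vertices (n : ℕ) (hn : 2 ≤ n) (heven : Even n) :
    Nat.card {x : ZMod n × Sym2 (ZMod n) //
        ∀ p ∈ x.2, p ≠ x.1 ∧ p.val % 2 = x.1.val % 2} =
      n ^ 2 * (n - 2) / 8 := by
  classical
  haveI : NeZero n := ⟨by omega⟩
  have e : {x : ZMod n × Sym2 (ZMod n) //
        ∀ p ∈ x.2, p ≠ x.1 ∧ p.val % 2 = x.1.val % 2} ≃
      Σ a : ZMod n, Sym2 {p : ZMod n // p ≠ a ∧ p.val % 2 = a.val % 2} :=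
    (Equiv.subtypeProdEquivSigmaSubtype
        (fun (a : ZMod n) (s : Sym2 (ZMod n)) => ∀ p ∈ s, p ≠ a ∧ p.val % 2 = a.val % 2)).trans
      (Equiv.sigmaCongrRight (fun a => sym2SubtypeEquiv _))
  rw [Nat.card_congr e, Nat.card_eq_fintype_card, Fintype.card_sigma]
  have key : ∀ a : ZMod n,
      Fintype.card (Sym2 {p : ZMod n // p ≠ a ∧ p.val % 2 = a.val % 2}) =
        (n / 2).choose 2 := by
    intro a
    rw [Sym2.card]
    have h := card_even_subtype n hn heven a
    rw [Nat.card_eq_fintype_card] at h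
    rw [h]
    congr 1
    have : 2 ≤ n / 2 * 2 := by omega
    omega
  simp_rw [key]
  rw [Finset.sum_const, Finset.card_univ, ZMod.card, smul_eq_mul]
  obtain ⟨m, rfl⟩ := heven
  obtain ⟨j, rfl⟩ : ∃ j, m = j + 1 := ⟨m - 1, by omega⟩
  have hdiv : (j + 1 + (j + 1)) / 2 = j + 1 := by omega
  rw [hdiv, Nat.choose_two_right]
  have heven2 : Even ((j + 1) * (j + 1 - 1)) := by
    simpa [Nat.mul_comm] using Nat.even_mul_succ_self j
  obtain ⟨k, hk⟩ := heven2
  rw [hk, show (k + k) / 2 = k from by omega]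
  have h8 : (j + 1 + (j + 1)) ^ 2 * (j + 1 + (j + 1) - 2) = 8 * ((j + 1 + (j + 1)) * k) := by
    have hk' : (j + 1) * j = k + k := by simpa using hk
    rw [show j + 1 + (j + 1) - 2 = 2 * j from by omega]
    zify at hk' ⊢
    linear_combination (8 * ((j : ℤ) + 1)) * hk'
  rw [h8, Nat.mul_div_cancel_left _ (by norm_num)]
end
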